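/- Let λ > 0, T > 0, and ȳ > 0. Let y : ℝ → ℝ be a function such that t ↦ y(t)·e^(−λt) is integrable on [0, ∞), y(t) = ȳ for all t ≥ T, and ∫_0^∞ y(t)·e^(−λt) dt = 0. If M is a real number such that −y(t)/ȳ ≤ M for all t ∈ [0, T], then M ≥ 1/(e^(λT) − 1). -/
import Mathlib

open MeasureTheory

lemma exp_neg_mul_Ioi_integral (lam a : ℝ) (hlam : 0 < lam) :
    ∫ t in Set.Ioi a, Real.exp (-lam * t) = Real.exp (-lam * a) / lam := by
  have h := integral_comp_mul_left_Ioi (fun u => Real.exp (-u)) a hlam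
  simp only [← neg_mul, smul_eq_mul] at h
  rw [h, integral_exp_neg_Ioi, neg_mul]
  ring

lemma exp_neg_mul_integrable (lam a : ℝ) (hlam : 0 < lam) :
    IntegrableOn (fun t => Real.exp (-lam * t)) (Set.Ioi a) := by
  simpa using exp_neg_integrableOn_Ioi a hlam

/-- If `λ > 0`, `T > 0`, `ȳ > 0`, `t ↦ y t * exp(-λ t)` is integrable on `[0, ∞)`,
`y t = ȳ` for all `t ≥ T`, `∫_0^∞ y t * exp(-λ t) dt = 0`, and `M` bounds
`-y t / ȳ` on `[0, T]`, then `M ≥ 1 / (exp(λ T) - 1)`. -/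
theorem undershoot_lower_bound (lam T ybar : ℝ) (hlam : 0 < lam) (hT : 0 < T)
    (hybar : 0 < ybar) (y : ℝ → ℝ)
    (hint : IntegrableOn (fun t => y t * Real.exp (-lam * t)) (Set.Ici 0))
    (hsettle : ∀ t, T ≤ t → y t = ybar)
    (hzero : ∫ t in Set.Ioi (0 : ℝ), y t * Real.exp (-lam * t) = 0)
    (M : ℝ) (hM : ∀ t ∈ Set.Icc (0 : ℝ) T, -y t / ybar ≤ M) :
    1 / (Real.exp (lam * T) - 1) ≤ M := by
  have hint' : IntegrableOn (fun t => y t * Real.exp (-lam * t)) (Set.Ioi 0) :=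
    hint.mono_set Set.Ioi_subset_Ici_self
  have hsplit : Set.Ioc 0 T ∪ Set.Ioi T = Set.Ioi (0:ℝ) := Set.Ioc_union_Ioi_eq_Ioi hT.le
  have hi1 : IntegrableOn (fun t => y t * Real.exp (-lam * t)) (Set.Ioc 0 T) :=
    hint'.mono_set (by rw [← hsplit]; exact Set.subset_union_left)
  have hi2 : IntegrableOn (fun t => y t * Real.exp (-lam * t)) (Set.Ioi T) :=
    hint'.mono_set (by rw [← hsplit]; exact Set.subset_union_right)
  have hunion : (∫ t in Set.Ioc 0 T, y t * Real.exp (-lam * t))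
      + ∫ t in Set.Ioi T, y t * Real.exp (-lam * t) = 0 := by
    rw [← setIntegral_union (Set.Ioc_disjoint_Ioi le_rfl) measurableSet_Ioi hi1 hi2, hsplit,
      hzero]
  -- compute the tail integral
  have htail : ∫ t in Set.Ioi T, y t * Real.exp (-lam * t)
      = ybar * (Real.exp (-lam * T) / lam) := by
    have : ∫ t in Set.Ioi T, y t * Real.exp (-lam * t)
        = ∫ t in Set.Ioi T, ybar * Real.exp (-lam * t) := by
      apply setIntegral_congr_fun measurableSet_Ioi
      intro t ht
      simp only [hsettle t (le_of_lt ht)]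
    rw [this, integral_const_mul, exp_neg_mul_Ioi_integral lam T hlam]
  -- compute ∫ exp on Ioc 0 T via Ioi 0 minus Ioi T
  have hcomp : ∫ t in Set.Ioc 0 T, Real.exp (-lam * t)
      = (1 - Real.exp (-lam * T)) / lam := by
    have hu := setIntegral_union (f := fun t => Real.exp (-lam * t))
      (Set.Ioc_disjoint_Ioi (le_refl T)) measurableSet_Ioi
      ((exp_neg_mul_integrable lam 0 hlam).mono_set Set.Ioc_subset_Ioi_self)
      (exp_neg_mul_integrable lam T hlam)
    rw [hsplit, exp_neg_mul_Ioi_integral lam 0 hlam, exp_neg_mul_Ioi_integral lam T hlam] at hu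
    have h0 : Real.exp (-lam * 0) = 1 := by simp
    rw [h0] at hu
    field_simp at hu ⊢
    linarith
  -- bound the head integral from below
  have hmono : (∫ t in Set.Ioc 0 T, (-(M * ybar)) * Real.exp (-lam * t))
      ≤ ∫ t in Set.Ioc 0 T, y t * Real.exp (-lam * t) := by
    apply setIntegral_mono_on
    · exact (Integrable.const_mul ((exp_neg_mul_integrable lam 0 hlam).mono_set
        Set.Ioc_subset_Ioi_self) _)
    · exact hi1
    · exact measurableSet_Ioc
    · intro t ht
      have hb := hM t ⟨ht.1.le, ht.2⟩
      have hyb : -(M * ybar) ≤ y t := by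
        rw [div_le_iff₀ hybar] at hb
        linarith
      exact mul_le_mul_of_nonneg_right hyb (Real.exp_pos _).le
  rw [integral_const_mul, hcomp] at hmono
  have hhead : (∫ t in Set.Ioc 0 T, y t * Real.exp (-lam * t))
      = -(ybar * (Real.exp (-lam * T) / lam)) := by linarith
  have key : -(M * ybar) * ((1 - Real.exp (-lam * T)) / lam)
      ≤ -(ybar * (Real.exp (-lam * T) / lam)) := by linarith
  -- clear the division by lam
  set e := Real.exp (-lam * T) with he
  set E := Real.exp (lam * T) with hE
  have hEpos : 0 < E := Real.exp_pos _
  have hE1 : 1 < E := by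
    rw [hE, show (1:ℝ) = Real.exp 0 by simp]
    exact Real.exp_lt_exp.mpr (by positivity)
  have heE : e * E = 1 := by
    rw [he, hE, ← Real.exp_add]; simp
  have key2 : -(M * ybar) * (1 - e) ≤ -(ybar * e) := by
    rw [← mul_div_assoc, ← mul_div_assoc, ← neg_div, div_le_div_iff_of_pos_right hlam] at key
    linarith
  have key3 := mul_le_mul_of_nonneg_right key2 hEpos.le
  -- key3 : -(M*ybar)*(1-e)*E ≤ -(ybar*e)*E = -ybar
  have l : -(M * ybar) * (1 - e) * E = -(M * ybar) * E + M * ybar * (e * E) := by ring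
  have r : -(ybar * e) * E = -(ybar * (e * E)) := by ring
  rw [l, r, heE] at key3
  rw [div_le_iff₀ (by linarith : (0:ℝ) < E - 1)]
  nlinarith [key3, hybar]
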